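/- arXiv:1403.0537 — 2 statements merged into one kernel-verified Lean document; each statement's English description precedes it below -/
import Mathlib

section
/- Let 0 < q ≤ 1, γ̄ > 0, and γ(θ,q) = γ̄·(1 - ((1-q²)/(1+q²))·cosθ). Then for all x ≥ 0, the cumulative distribution function of the squared Hoyt distribution equals F(x) = 1 - (1/π)·∫₀^π e^{-x/γ(θ,q)} dθ. -/
/-!
Expanding `I₀(z) = π⁻¹ ∫₀^π exp (z cos θ) dθ` and integrating in `t` first writes the CDF as a
mixture of exponential CDFs: with `k = (1 - q²)/(1 + q²)` and `a = (1 + q²)²/(4 q² γ̄)`,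
`F(x) = π⁻¹ ∫₀^π √(1 - k²)/(1 - k cos θ) · (1 - exp (-a x (1 - k cos θ))) dθ`.
The substitution `cos ψ = (k - cos θ)/(1 - k cos θ)` has Jacobian `√(1 - k²)/(1 - k cos θ)` and
satisfies `1 - k cos ψ = (1 - k²)/(1 - k cos θ)`, which turns this into
`1 - π⁻¹ ∫₀^π exp (-x / (γ̄ (1 - k cos ψ))) dψ`.
-/

open Real intervalIntegral

/-- Modified Bessel function of the first kind, order zero. -/
noncomputable def besselI0 (z : ℝ) : ℝ := ∑' n : ℕ, (z / 2) ^ (2 * n) / (n.factorial : ℝ) ^ 2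

open Set

theorem Nat.factorial_two_mul_eq_centralBinom_mul (n : ℕ) :
    (2 * n).factorial = n.centralBinom * n.factorial ^ 2 := by
  rw [centralBinom_eq_two_mul_choose, two_mul, ← add_choose_mul_factorial_mul_factorial]
  ring

theorem integral_cos_pow_two_mul_add_one (n : ℕ) :
    ∫ θ in (0:ℝ)..π, cos θ ^ (2 * n + 1) = 0 := by
  induction n with
  | zero => simp
  | succ n ih => rw [show 2 * (n + 1) + 1 = 2 * n + 1 + 2 by ring, integral_cos_pow, ih]; simp

theorem integral_cos_pow_two_mul (n : ℕ) :
    ∫ θ in (0:ℝ)..π, cos θ ^ (2 * n) = π * n.centralBinom / 4 ^ n := by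
  induction n with
  | zero => simp
  | succ n ih =>
    have h : ((n + 1 : ℕ) : ℝ) * (n + 1).centralBinom = 2 * (2 * n + 1) * n.centralBinom := by
      exact_mod_cast Nat.succ_mul_centralBinom_succ n
    rw [mul_add_one, integral_cos_pow, ih]
    push_cast at h ⊢
    simp only [sin_zero, sin_pi, mul_zero, sub_zero, zero_div, zero_add]
    rw [pow_succ, div_mul_div_comm, div_eq_div_iff (by positivity) (by positivity)]
    linear_combination (-2 * 4 ^ n * π) * h

theorem hasSum_integral_exp_mul_cos (z : ℝ) :
    HasSum (fun n : ℕ => z ^ n / n.factorial * ∫ θ in (0:ℝ)..π, cos θ ^ n)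
      (∫ θ in (0:ℝ)..π, exp (z * cos θ)) := by
  have hterm (n : ℕ) : z ^ n / n.factorial * ∫ θ in (0:ℝ)..π, cos θ ^ n =
      ∫ θ in (0:ℝ)..π, (z * cos θ) ^ n / n.factorial := by
    rw [← integral_const_mul]; simp only [mul_pow]; ring_nf
  simp only [hterm]
  refine hasSum_integral_of_dominated_convergence (fun n _ => |z| ^ n / n.factorial)
    (fun n => by fun_prop) (fun n => .of_forall fun θ _ => ?_)
    (.of_forall fun _ _ => Real.summable_pow_div_factorial |z|) intervalIntegrable_const
    (.of_forall fun θ _ => by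
      simpa [← Real.exp_eq_exp_ℝ] using NormedSpace.expSeries_div_hasSum_exp (z * cos θ))
  rw [norm_div, norm_pow, Real.norm_eq_abs, abs_mul, RCLike.norm_natCast]
  gcongr
  exact mul_le_of_le_one_right (abs_nonneg z) (abs_cos_le_one θ)

theorem besselI0_eq_integral (z : ℝ) :
    besselI0 z = π⁻¹ * ∫ θ in (0:ℝ)..π, exp (z * cos θ) := by
  have hsum := hasSum_integral_exp_mul_cos z
  have hterm (n : ℕ) : z ^ (2 * n) / (2 * n).factorial * ∫ θ in (0:ℝ)..π, cos θ ^ (2 * n) =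
      π * ((z / 2) ^ (2 * n) / (n.factorial : ℝ) ^ 2) := by
    rw [integral_cos_pow_two_mul, Nat.factorial_two_mul_eq_centralBinom_mul, div_pow,
      pow_mul (2 : ℝ) 2 n]
    have : (n.centralBinom : ℝ) ≠ 0 := mod_cast n.centralBinom_ne_zero
    push_cast
    field_simp
    norm_num
  have heven : HasSum (fun n : ℕ => z ^ (2 * n) / (2 * n).factorial *
      ∫ θ in (0:ℝ)..π, cos θ ^ (2 * n)) (π * besselI0 z) := by
    have hs := hsum.summable.comp_injective (mul_right_injective₀ two_ne_zero)
    simp only [Function.comp_def, hterm] at hs ⊢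
    rw [besselI0, ← tsum_mul_left]
    exact hs.hasSum
  have hodd : HasSum (fun n : ℕ => z ^ (2 * n + 1) / (2 * n + 1).factorial *
      ∫ θ in (0:ℝ)..π, cos θ ^ (2 * n + 1)) 0 := by
    simpa only [integral_cos_pow_two_mul_add_one, mul_zero] using hasSum_zero
  have := (HasSum.even_add_odd
    (f := fun n : ℕ => z ^ n / n.factorial * ∫ θ in (0:ℝ)..π, cos θ ^ n) heven hodd).unique hsum
  rw [← this, add_zero, inv_mul_cancel_left₀ pi_ne_zero]

noncomputable def moebiusMap (k c : ℝ) : ℝ := (k - c) / (1 - k * c)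

section Moebius

variable {k : ℝ}

theorem one_sub_mul_pos (hk : |k| < 1) {c : ℝ} (hc : |c| ≤ 1) : 0 < 1 - k * c := by
  have : |k * c| < 1 := by
    rw [abs_mul]; exact lt_of_le_of_lt (mul_le_of_le_one_right (abs_nonneg k) hc) hk
  linarith [le_abs_self (k * c)]

theorem one_sub_sq_pos (hk : |k| < 1) : 0 < 1 - k ^ 2 :=
  sub_pos.mpr ((sq_lt_one_iff_abs_lt_one k).mpr hk)

theorem one_sub_sq_moebiusMap {c : ℝ} (h : 1 - k * c ≠ 0) :
    1 - moebiusMap k c ^ 2 = (1 - k ^ 2) * (1 - c ^ 2) / (1 - k * c) ^ 2 := by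
  rw [moebiusMap]; field_simp; ring

theorem one_sub_mul_moebiusMap {c : ℝ} (h : 1 - k * c ≠ 0) :
    1 - k * moebiusMap k c = (1 - k ^ 2) / (1 - k * c) := by
  rw [moebiusMap]; field_simp; ring

theorem abs_moebiusMap_le_one (hk : |k| < 1) {c : ℝ} (hc : |c| ≤ 1) :
    |moebiusMap k c| ≤ 1 := by
  have h : 0 ≤ 1 - moebiusMap k c ^ 2 := by
    rw [one_sub_sq_moebiusMap (one_sub_mul_pos hk hc).ne']
    have : c ^ 2 ≤ 1 := by rwa [sq_le_one_iff_abs_le_one]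
    exact div_nonneg (mul_nonneg (one_sub_sq_pos hk).le (by linarith)) (sq_nonneg _)
  rw [← sq_le_one_iff_abs_le_one]; linarith

theorem hasDerivAt_arccos_moebiusMap_cos (hk : |k| < 1) {θ : ℝ} (hθ : θ ∈ Ioo 0 π) :
    HasDerivAt (fun θ => arccos (moebiusMap k (cos θ)))
      (-(√(1 - k ^ 2) / (1 - k * cos θ))) θ := by
  have hc := one_sub_mul_pos hk (abs_cos_le_one θ)
  have hk2 := one_sub_sq_pos hk
  have hsin := sin_pos_of_pos_of_lt_pi hθ.1 hθ.2
  have hr : HasDerivAt (fun θ => moebiusMap k (cos θ))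
      ((1 - k ^ 2) * sin θ / (1 - k * cos θ) ^ 2) θ := by
    refine (((hasDerivAt_cos θ).const_sub k).fun_div
      (((hasDerivAt_cos θ).const_mul k).const_sub 1) hc.ne').congr_deriv ?_
    ring
  have hsqrt : √(1 - moebiusMap k (cos θ) ^ 2) = √(1 - k ^ 2) * sin θ / (1 - k * cos θ) := by
    rw [one_sub_sq_moebiusMap hc.ne', ← sin_sq, ← sq_sqrt hk2.le, ← mul_pow, ← div_pow,
      sqrt_sq (by positivity), sq_sqrt hk2.le]
  have hr1 : moebiusMap k (cos θ) ^ 2 < 1 := by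
    rw [← sub_pos, ← sqrt_pos, hsqrt]; positivity
  rw [sq_lt_one_iff_abs_lt_one, abs_lt] at hr1
  refine ((hasDerivAt_arccos hr1.1.ne' hr1.2.ne).comp θ hr).congr_deriv ?_
  rw [hsqrt]
  field_simp
  linear_combination sq_sqrt hk2.le

theorem integral_moebiusMap_cos {E : Type*} [NormedAddCommGroup E] [NormedSpace ℝ E]
    (hk : |k| < 1) {H : ℝ → E} (hH : ContinuousOn H (Icc (-1) 1)) :
    ∫ θ in (0:ℝ)..π, (√(1 - k ^ 2) / (1 - k * cos θ)) • H (moebiusMap k (cos θ)) =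
      ∫ ψ in (0:ℝ)..π, H (cos ψ) := by
  have hc (θ : ℝ) := (one_sub_mul_pos hk (abs_cos_le_one θ)).ne'
  have hk1 : 1 - k ≠ 0 := by linarith [le_abs_self k]
  have hk1' : 1 + k ≠ 0 := by linarith [neg_abs_le k]
  have hm : Continuous fun θ => arccos (moebiusMap k (cos θ)) :=
    continuous_arccos.comp <| Continuous.div (by fun_prop) (by fun_prop) hc
  have hm0 : arccos (moebiusMap k (cos 0)) = π := by
    rw [cos_zero, moebiusMap, mul_one, ← neg_sub, neg_div, div_self hk1, arccos_neg_one]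
  have hmπ : arccos (moebiusMap k (cos π)) = 0 := by
    rw [cos_pi, moebiusMap, mul_neg_one, sub_neg_eq_add, sub_neg_eq_add, add_comm,
      div_self hk1', arccos_one]
  have hsub := integral_deriv_smul_comp'' (a := 0) (b := π) (g := fun ψ => H (cos ψ))
    hm.continuousOn
    (fun θ hθ => by
      rw [min_eq_left pi_pos.le, max_eq_right pi_pos.le] at hθ
      exact (hasDerivAt_arccos_moebiusMap_cos hk hθ).hasDerivWithinAt)
    (Continuous.continuousOn (by fun_prop (disch := exact hc)))
    (hH.comp continuous_cos.continuousOn fun ψ _ => ⟨neg_one_le_cos ψ, cos_le_one ψ⟩)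
  rw [hm0, hmπ, integral_symm 0 π] at hsub
  simp only [Function.comp_apply, neg_smul, integral_neg, neg_inj] at hsub
  rw [← hsub]
  refine integral_congr fun θ _ => ?_
  have := abs_le.mp (abs_moebiusMap_le_one hk (abs_cos_le_one θ))
  simp only [cos_arccos this.1 this.2]

theorem integral_sqrt_div_one_sub_mul_cos (hk : |k| < 1) :
    ∫ θ in (0:ℝ)..π, √(1 - k ^ 2) / (1 - k * cos θ) = π := by
  simpa using integral_moebiusMap_cos hk (H := fun _ => (1 : ℝ)) continuousOn_const

theorem integral_exp_neg_div_one_sub_mul_cos (hk : |k| < 1) (b : ℝ) :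
    ∫ ψ in (0:ℝ)..π, exp (-b / (1 - k * cos ψ)) =
      ∫ θ in (0:ℝ)..π, √(1 - k ^ 2) / (1 - k * cos θ) *
        exp (-(b / (1 - k ^ 2)) * (1 - k * cos θ)) := by
  have hH : ContinuousOn (fun c => exp (-b / (1 - k * c))) (Icc (-1) 1) :=
    continuous_exp.comp_continuousOn <| continuousOn_const.div (by fun_prop)
      fun c hc => (one_sub_mul_pos hk (abs_le.mpr hc)).ne'
  rw [← integral_moebiusMap_cos hk hH]
  refine integral_congr fun θ _ => ?_
  have hc := one_sub_mul_pos hk (abs_cos_le_one θ)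
  have hk2 := (one_sub_sq_pos hk).ne'
  simp only [smul_eq_mul, one_sub_mul_moebiusMap hc.ne']
  field_simp

end Moebius

theorem intervalIntegral_integral_swap {E : Type*} [NormedAddCommGroup E] [NormedSpace ℝ E]
    {f : ℝ → ℝ → E} (hf : Continuous (Function.uncurry f)) (a b c d : ℝ) :
    ∫ x in a..b, ∫ y in c..d, f x y = ∫ y in c..d, ∫ x in a..b, f x y := by
  simp only [intervalIntegral_eq_integral_uIoc, MeasureTheory.integral_smul]
  rw [smul_comm, MeasureTheory.integral_integral_swap]
  rw [MeasureTheory.Measure.prod_restrict, ← MeasureTheory.Measure.volume_eq_prod]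
  exact (hf.continuousOn.integrableOn_compact (isCompact_uIcc.prod isCompact_uIcc)).mono_set
    (prod_mono uIoc_subset_uIcc uIoc_subset_uIcc)

theorem integral_exp_neg_mul {c : ℝ} (hc : c ≠ 0) (x : ℝ) :
    ∫ t in (0:ℝ)..x, exp (-(c * t)) = (1 - exp (-(c * x))) / c := by
  simp only [← neg_mul]
  rw [integral_comp_mul_left exp (neg_ne_zero.mpr hc), integral_exp, mul_zero, exp_zero,
    smul_eq_mul]
  field_simp
  ring

theorem integral_mul_exp_mul_besselI0 {k : ℝ} (hk : |k| < 1) {a : ℝ} (ha : a ≠ 0) (x : ℝ) :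
    ∫ t in (0:ℝ)..x, a * √(1 - k ^ 2) * exp (-(a * t)) * besselI0 (a * k * t) =
      1 - π⁻¹ * ∫ θ in (0:ℝ)..π, exp (-(a * (1 - k ^ 2) * x) / (1 - k * cos θ)) := by
  have hc (θ : ℝ) := (one_sub_mul_pos hk (abs_cos_le_one θ)).ne'
  have hexp := integral_exp_neg_div_one_sub_mul_cos hk (a * (1 - k ^ 2) * x)
  rw [show a * (1 - k ^ 2) * x / (1 - k ^ 2) = a * x by
    field_simp [(one_sub_sq_pos hk).ne']] at hexp
  set S := √(1 - k ^ 2)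
  have hS : Continuous fun θ => S / (1 - k * cos θ) := continuous_const.div (by fun_prop) hc
  calc _ = ∫ t in (0:ℝ)..x, π⁻¹ * (a * S) *
        ∫ θ in (0:ℝ)..π, exp (-(a * (1 - k * cos θ) * t)) := by
        refine integral_congr fun t _ => ?_
        simp only [besselI0_eq_integral, ← integral_const_mul]
        refine integral_congr fun θ _ => ?_
        rw [show -(a * (1 - k * cos θ) * t) = -(a * t) + a * k * t * cos θ by ring, exp_add]
        ring
    _ = π⁻¹ * (a * S) * ∫ θ in (0:ℝ)..π, ∫ t in (0:ℝ)..x, exp (-(a * (1 - k * cos θ) * t)) := by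
        rw [integral_const_mul, intervalIntegral_integral_swap (by fun_prop)]
    _ = π⁻¹ * ∫ θ in (0:ℝ)..π, (S / (1 - k * cos θ) -
          S / (1 - k * cos θ) * exp (-(a * x) * (1 - k * cos θ))) := by
        rw [mul_assoc, ← integral_const_mul (a * S)]
        refine congrArg _ (integral_congr fun θ _ => ?_)
        rw [integral_exp_neg_mul (mul_ne_zero ha (hc θ))]
        have := hc θ
        field_simp
    _ = _ := by
        have hint : IntervalIntegrable
            (fun θ => S / (1 - k * cos θ) * exp (-(a * x) * (1 - k * cos θ)))
            MeasureTheory.volume 0 π :=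
          (hS.mul (by fun_prop)).intervalIntegrable _ _
        rw [integral_sub (hS.intervalIntegrable _ _) hint, integral_sqrt_div_one_sub_mul_cos hk,
          hexp, mul_sub, inv_mul_cancel₀ pi_ne_zero]

theorem hoyt_cdf_general (q γbar x : ℝ) (hq0 : 0 < q) (hγ : 0 < γbar) :
    (∫ t in (0:ℝ)..x,
        ((1 + q ^ 2) / (2 * q * γbar)) *
          Real.exp (-((1 + q ^ 2) ^ 2 * t) / (4 * q ^ 2 * γbar)) *
            besselI0 ((1 - q ^ 4) * t / (4 * q ^ 2 * γbar))) =
      1 - (1 / π) * ∫ θ in (0:ℝ)..π,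
        Real.exp (-x / (γbar * (1 - (1 - q ^ 2) / (1 + q ^ 2) * Real.cos θ))) := by
  set k := (1 - q ^ 2) / (1 + q ^ 2) with hk_def
  set a := (1 + q ^ 2) ^ 2 / (4 * q ^ 2 * γbar) with ha_def
  have hk : |k| < 1 := by
    rw [abs_lt, lt_div_iff₀ (by positivity), div_lt_one (by positivity)]
    constructor <;> nlinarith
  have hS : √(1 - k ^ 2) = 2 * q / (1 + q ^ 2) := by
    rw [show 1 - k ^ 2 = (2 * q / (1 + q ^ 2)) ^ 2 by rw [hk_def]; field_simp; ring]
    exact sqrt_sq (by positivity)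
  have hC : (1 + q ^ 2) / (2 * q * γbar) = a * √(1 - k ^ 2) := by
    rw [hS, ha_def]; field_simp; ring
  have hB : (1 - q ^ 4) / (4 * q ^ 2 * γbar) = a * k := by
    rw [ha_def, hk_def]; field_simp; ring
  have hγa : a * (1 - k ^ 2) = γbar⁻¹ := by
    rw [ha_def, hk_def]; field_simp; ring
  calc _ = ∫ t in (0:ℝ)..x, a * √(1 - k ^ 2) * exp (-(a * t)) * besselI0 (a * k * t) := by
        refine integral_congr fun t _ => ?_
        rw [hC, neg_div, mul_div_right_comm, mul_div_right_comm (1 - q ^ 4), hB]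
    _ = _ := integral_mul_exp_mul_besselI0 hk (by positivity) x
    _ = _ := by
        rw [one_div, hγa]
        refine congrArg _ (congrArg _ (integral_congr fun θ _ => ?_))
        rw [← div_div, inv_mul_eq_div, neg_div γbar x]

theorem hoyt_cdf (q γbar x : ℝ) (hq0 : 0 < q) (hq1 : q ≤ 1) (hγ : 0 < γbar) (hx : 0 ≤ x) :
    (∫ t in (0:ℝ)..x,
        ((1 + q ^ 2) / (2 * q * γbar)) *
          Real.exp (-((1 + q ^ 2) ^ 2 * t) / (4 * q ^ 2 * γbar)) *
            besselI0 ((1 - q ^ 4) * t / (4 * q ^ 2 * γbar))) =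
      1 - (1 / π) * ∫ θ in (0:ℝ)..π,
        Real.exp (-x / (γbar * (1 - (1 - q ^ 2) / (1 + q ^ 2) * Real.cos θ))) :=
  hoyt_cdf_general q γbar x hq0 hγ
end

section
/- Let γ̄_b, γ̄_e > 0 and q_e ∈ (0,1] with ε_e = (1-q_e²)/(1+q_e²). If γ_b is exponential with mean γ̄_b and γ_e is squared Hoyt with mean γ̄_e and parameter q_e, independent, then P(γ_b > γ_e) = (γ̄_b/(γ̄_b + γ̄_e))·[1 - (ε_e·γ̄_e/(γ̄_b + γ̄_e))²]^{-1/2}. Moreover, for fixed γ̄_b, γ̄_e, this probability is decreasing in q_e. -/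
open Real MeasureTheory ProbabilityTheory intervalIntegral

/-!
By independence, `P(γ_e < γ_b) = E[exp (-γ_e / γ̄_b)]`. A Laplace transform `E[exp (-s Y)]` is
`∫ s e^{-st} P(Y ≤ t) dt` (Tonelli, from `e^{-sy} = ∫_y^∞ s e^{-st} dt`), and the squared Hoyt CDF
is the average over `θ ∈ (0, π)` of exponential CDFs with means `c θ = γ̄_e (1 - ε_e cos θ)`, so
Fubini gives `E[exp (-s γ_e)] = (1/π) ∫₀^π dθ / (1 + s c θ)`. For `s = 1/γ̄_b` this is
`γ̄_b / (γ̄_b + γ̄_e)` times the mean of `1 / (1 - A cos θ)`, `A = ε_e γ̄_e / (γ̄_b + γ̄_e)`,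
which is `1 / √(1 - A²)` by the Poisson kernel integral. Finally `A` decreases with `q_e` on
`(0, 1]`.
-/

open Set

lemma one_sub_mul_cos_pos {r : ℝ} (hr : |r| < 1) (θ : ℝ) : 0 < 1 - r * cos θ := by
  have : |r * cos θ| ≤ |r| := by
    rw [abs_mul]; exact mul_le_of_le_one_right (abs_nonneg r) (abs_cos_le_one θ)
  linarith [le_abs_self (r * cos θ)]

theorem integral_poisson_kernel {r : ℝ} (hr : |r| < 1) :
    ∫ θ in 0..π, (1 - r ^ 2) / (1 - 2 * r * cos θ + r ^ 2) = π := by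
  have hden : ∀ θ, 1 - 2 * r * cos θ + r ^ 2 = (1 - r * cos θ) ^ 2 + (r * sin θ) ^ 2 := fun θ => by
    linear_combination -r ^ 2 * sin_sq_add_cos_sq θ
  have hpos : ∀ θ, 0 < 1 - 2 * r * cos θ + r ^ 2 := fun θ => by
    rw [hden]; nlinarith [one_sub_mul_cos_pos hr θ, sq_nonneg (r * sin θ)]
  have hderiv : ∀ θ, HasDerivAt (fun θ => θ + 2 * arctan (r * sin θ / (1 - r * cos θ)))
      ((1 - r ^ 2) / (1 - 2 * r * cos θ + r ^ 2)) θ := by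
    intro θ
    have hc := one_sub_mul_cos_pos hr θ
    have h := (((hasDerivAt_sin θ).const_mul r).div
      (HasDerivAt.const_sub 1 ((hasDerivAt_cos θ).const_mul r)) hc.ne').arctan
    refine ((hasDerivAt_id θ).add (h.const_mul 2)).congr_deriv ?_
    have := hpos θ
    simp only [Pi.div_apply]
    rw [hden] at this ⊢
    field_simp
    linear_combination -r ^ 2 * sin_sq_add_cos_sq θ
  rw [integral_eq_sub_of_hasDerivAt (fun θ _ => hderiv θ)]
  · simp
  · exact (continuous_const.div (by fun_prop) fun θ => (hpos θ).ne').intervalIntegrable _ _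

theorem integral_inv_one_sub_mul_cos {a : ℝ} (ha : |a| < 1) :
    ∫ θ in 0..π, (1 - a * cos θ)⁻¹ = π / √(1 - a ^ 2) := by
  set s := √(1 - a ^ 2)
  have hs2 : s ^ 2 = 1 - a ^ 2 := sq_sqrt (by nlinarith [sq_abs a, abs_nonneg a])
  have hs : 0 < s := sqrt_pos.mpr (by nlinarith [sq_abs a, abs_nonneg a])
  -- the Poisson kernel with parameter `r` is `√(1 - a²) / (1 - a cos θ)` for `a = 2r / (1 + r²)`
  set r := a / (1 + s) with hr_def
  have hr : |r| < 1 := by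
    rw [abs_div, abs_of_pos (by linarith : 0 < 1 + s), div_lt_one (by linarith)]; linarith
  have hkernel : ∀ θ, (1 - a * cos θ)⁻¹ = s⁻¹ * ((1 - r ^ 2) / (1 - 2 * r * cos θ + r ^ 2)) := by
    intro θ
    have : 1 + s ≠ 0 := by positivity
    have h1 : 1 - r ^ 2 = 2 * s / (1 + s) := by
      rw [hr_def]; field_simp; linear_combination -hs2
    have h2 : 1 - 2 * r * cos θ + r ^ 2 = 2 / (1 + s) * (1 - a * cos θ) := by
      rw [hr_def]; field_simp; linear_combination hs2
    have := one_sub_mul_cos_pos ha θ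
    rw [h1, h2]
    field_simp
  simp_rw [hkernel, intervalIntegral.integral_const_mul, integral_poisson_kernel hr]
  field_simp

theorem ProbabilityTheory.IndepFun.measure_lt_eq_lintegral_map_Ioi {Ω : Type*}
    [MeasurableSpace Ω] {P : Measure Ω} [IsFiniteMeasure P] {X Y : Ω → ℝ}
    (hX : Measurable X) (hY : Measurable Y)
    (hXY : IndepFun X Y P) :
    P {ω | Y ω < X ω} = ∫⁻ y, P.map X (Ioi y) ∂P.map Y := by
  have hs : MeasurableSet {p : ℝ × ℝ | p.2 < p.1} := measurableSet_lt measurable_snd measurable_fst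
  change P ((fun ω => (X ω, Y ω)) ⁻¹' {p : ℝ × ℝ | p.2 < p.1}) = _
  rw [← Measure.map_apply (hX.prodMk hY) hs,
    (indepFun_iff_map_prod_eq_prod_map_map hX.aemeasurable hY.aemeasurable).mp hXY,
    Measure.prod_apply_symm hs]
  rfl

theorem map_measure_Ioi_eq_ofReal {Ω : Type*} [MeasurableSpace Ω] {P : Measure Ω}
    [IsProbabilityMeasure P] {X : Ω → ℝ} (hX : Measurable X) {y p : ℝ}
    (h : (P {ω | X ω ≤ y}).toReal = 1 - p) : P.map X (Ioi y) = ENNReal.ofReal p := by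
  have := Measure.isProbabilityMeasure_map (μ := P) hX.aemeasurable
  rw [← ofReal_measureReal, ← compl_Iic, probReal_compl_eq_one_sub measurableSet_Iic,
    map_measureReal_apply hX measurableSet_Iic]
  exact congrArg ENNReal.ofReal (by change 1 - (P {ω | X ω ≤ y}).toReal = p; linarith)

theorem lintegral_exp_neg_mul_eq_lintegral_cdf (μ : Measure ℝ) [SFinite μ] {s : ℝ} (hs : 0 < s) :
    ∫⁻ y, ENNReal.ofReal (exp (-s * y)) ∂μ =
      ∫⁻ t, ENNReal.ofReal (s * exp (-s * t)) * μ (Iic t) := by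
  have hexp_tail : ∀ y, ENNReal.ofReal (exp (-s * y)) =
      ∫⁻ t, (Ici y).indicator (fun t => ENNReal.ofReal (s * exp (-s * t))) t := by
    intro y
    rw [lintegral_indicator measurableSet_Ici, setLIntegral_congr Ioi_ae_eq_Ici.symm,
      ← ofReal_integral_eq_lintegral_ofReal, MeasureTheory.integral_const_mul,
      integral_exp_mul_Ioi (neg_neg_of_pos hs)]
    · congr 1; field_simp
    · exact (integrableOn_exp_mul_Ioi (neg_neg_of_pos hs) y).const_mul s
    · exact ae_of_all _ fun t => by positivity
  simp_rw [hexp_tail]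
  rw [lintegral_lintegral_swap]
  · congr 1 with t
    simp_rw [← lintegral_indicator_const measurableSet_Iic, indicator, mem_Ici, mem_Iic]
  · have : Measurable fun p : ℝ × ℝ =>
        if p.1 ≤ p.2 then ENNReal.ofReal (s * exp (-s * p.2)) else 0 :=
      Measurable.ite (measurableSet_le measurable_fst measurable_snd) (by fun_prop) measurable_const
    exact this.aemeasurable

theorem exp_neg_div_le_one {t c : ℝ} (ht : 0 ≤ t) (hc : 0 ≤ c) : exp (-t / c) ≤ 1 :=
  exp_le_one_iff.mpr (div_nonpos_of_nonpos_of_nonneg (neg_nonpos.mpr ht) hc)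

theorem integral_Ioi_exp_mul_exp_div {s c : ℝ} (hs : 0 < s) (hc : 0 < c) :
    ∫ t in Ioi 0, s * exp (-s * t) * exp (-t / c) = 1 - (1 + s * c)⁻¹ := by
  have hexp : ∀ t, s * exp (-s * t) * exp (-t / c) = s * exp (-(s + c⁻¹) * t) := fun t => by
    rw [mul_assoc, ← exp_add]; congr 2; field_simp; ring
  have : 0 < s + c⁻¹ := by positivity
  simp_rw [hexp, MeasureTheory.integral_const_mul, integral_exp_mul_Ioi (neg_neg_of_pos this)]
  simp only [mul_zero, exp_zero]
  field_simp
  ring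

section Mixture

variable {Θ : Type*} [MeasurableSpace Θ] (ν : Measure Θ) [IsProbabilityMeasure ν] {c : Θ → ℝ}

theorem integral_Ioi_exp_mul_one_sub_integral_exp_div (hc : Measurable c) (hc_pos : ∀ θ, 0 < c θ)
    {s : ℝ} (hs : 0 < s) :
    ∫ t in Ioi 0, s * exp (-s * t) * (1 - ∫ θ, exp (-t / c θ) ∂ν) = ∫ θ, (1 + s * c θ)⁻¹ ∂ν := by
  have hexp_int : IntegrableOn (fun t => s * exp (-s * t)) (Ioi 0) :=
    (integrableOn_exp_mul_Ioi (neg_neg_of_pos hs) 0).const_mul s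
  have hprod_int : Integrable (Function.uncurry fun t θ => s * exp (-s * t) * exp (-t / c θ))
      ((volume.restrict (Ioi 0)).prod ν) := by
    have hfst : ∀ᵐ p ∂(volume.restrict (Ioi 0)).prod ν, (0 : ℝ) < p.1 :=
      Measure.quasiMeasurePreserving_fst.ae (ae_restrict_mem measurableSet_Ioi)
    refine (hexp_int.comp_fst ν).mono' (by fun_prop) (hfst.mono fun p hp => ?_)
    rw [Function.uncurry_apply_pair, norm_of_nonneg (by positivity)]
    exact mul_le_of_le_one_right (by positivity) (exp_neg_div_le_one hp.le (hc_pos p.2).le)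
  have hinv_int : Integrable (fun θ => (1 + s * c θ)⁻¹) ν := by
    refine (integrable_const 1).mono' (by fun_prop) (ae_of_all _ fun θ => ?_)
    have := hc_pos θ
    rw [norm_of_nonneg (by positivity)]
    exact inv_le_one_of_one_le₀ (by nlinarith)
  calc ∫ t in Ioi 0, s * exp (-s * t) * (1 - ∫ θ, exp (-t / c θ) ∂ν)
      = (∫ t in Ioi 0, s * exp (-s * t)) -
          ∫ t in Ioi 0, ∫ θ, s * exp (-s * t) * exp (-t / c θ) ∂ν := by
        simp_rw [mul_sub, mul_one, ← MeasureTheory.integral_const_mul]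
        exact MeasureTheory.integral_sub hexp_int hprod_int.integral_prod_left
    _ = 1 - ∫ θ, (1 - (1 + s * c θ)⁻¹) ∂ν := by
        have hinner : ∀ θ, ∫ t in Ioi 0, s * exp (-s * t) * exp (-t / c θ) =
            1 - (1 + s * c θ)⁻¹ := fun θ => integral_Ioi_exp_mul_exp_div hs (hc_pos θ)
        rw [integral_integral_swap hprod_int, MeasureTheory.integral_const_mul,
          integral_exp_mul_Ioi (neg_neg_of_pos hs)]
        simp_rw [hinner]
        field_simp
        simp
    _ = ∫ θ, (1 + s * c θ)⁻¹ ∂ν := by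
        rw [MeasureTheory.integral_sub (integrable_const 1) hinv_int]
        simp

theorem lintegral_exp_neg_mul_of_cdf_eq_mixture (hc : Measurable c) (hc_pos : ∀ θ, 0 < c θ)
    {μ : Measure ℝ} [SFinite μ]
    (hμ_cdf : ∀ a, 0 ≤ a → μ (Iic a) = ENNReal.ofReal (1 - ∫ θ, exp (-a / c θ) ∂ν))
    {s : ℝ} (hs : 0 < s) :
    ∫⁻ y, ENNReal.ofReal (exp (-s * y)) ∂μ = ENNReal.ofReal (∫ θ, (1 + s * c θ)⁻¹ ∂ν) := by
  set F : ℝ → ℝ := fun t => 1 - ∫ θ, exp (-t / c θ) ∂ν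
  have hF_meas : Measurable F := by
    have : StronglyMeasurable (Function.uncurry fun t θ => exp (-t / c θ)) := by
      fun_prop
    exact measurable_const.sub this.integral_prod_right'.measurable
  have hF_le : ∀ t, F t ≤ 1 := fun t =>
    sub_le_self _ (integral_nonneg fun θ => (exp_pos _).le)
  have hF_nonneg : ∀ t, 0 ≤ t → 0 ≤ F t := fun t ht => by
    have : ‖∫ θ, exp (-t / c θ) ∂ν‖ ≤ 1 * ν.real univ :=
      norm_integral_le_of_norm_le_const <| ae_of_all _ fun θ => by
        rw [norm_of_nonneg (exp_pos _).le]
        exact exp_neg_div_le_one ht (hc_pos θ).le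
    rw [probReal_univ, one_mul] at this
    exact sub_nonneg.mpr (le_of_abs_le this)
  have hμ_zero : μ (Iic 0) = 0 := by simp [hμ_cdf 0 le_rfl]
  have hint : IntegrableOn (fun t => s * exp (-s * t) * F t) (Ioi 0) := by
    refine ((integrableOn_exp_mul_Ioi (neg_neg_of_pos hs) 0).const_mul s).mono'
      (by fun_prop : Measurable _).aestronglyMeasurable
      ((ae_restrict_mem measurableSet_Ioi).mono fun t ht => ?_)
    rw [norm_of_nonneg (mul_nonneg (by positivity) (hF_nonneg t (le_of_lt ht)))]
    exact mul_le_of_le_one_right (by positivity) (hF_le t)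
  rw [lintegral_exp_neg_mul_eq_lintegral_cdf μ hs,
    ← integral_Ioi_exp_mul_one_sub_integral_exp_div ν hc hc_pos hs,
    ofReal_integral_eq_lintegral_ofReal hint
      ((ae_restrict_mem measurableSet_Ioi).mono fun t ht => by
        have := hF_nonneg t (le_of_lt ht); positivity),
    setLIntegral_congr Ioi_ae_eq_Ici, ← lintegral_indicator measurableSet_Ici]
  congr 1 with t
  rcases lt_or_ge t 0 with ht | ht
  · rw [indicator_of_notMem (by simpa using ht),
      measure_mono_null (Iic_subset_Iic.mpr ht.le) hμ_zero, mul_zero]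
  · rw [indicator_of_mem (by simpa using ht), hμ_cdf t ht, ← ENNReal.ofReal_mul (by positivity)]

end Mixture

theorem abs_one_sub_sq_div_one_add_sq_lt_one {q : ℝ} (hq : q ≠ 0) :
    |(1 - q ^ 2) / (1 + q ^ 2)| < 1 := by
  have : 0 < q ^ 2 := by positivity
  rw [abs_div, abs_of_pos (by positivity : (0 : ℝ) < 1 + q ^ 2), div_lt_one (by positivity), abs_lt]
  constructor <;> linarith

theorem abs_mul_div_add_lt_one {b g ε : ℝ} (hb : 0 < b) (hg : 0 < g) (hε : |ε| ≤ 1) :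
    |ε * g / (b + g)| < 1 := by
  have hbg : 0 < b + g := by positivity
  rw [abs_div, abs_mul, abs_of_pos hg, abs_of_pos hbg, div_lt_one hbg]
  nlinarith [mul_le_mul_of_nonneg_right hε hg.le]

theorem integral_cond_Ioc_pi (f : ℝ → ℝ) :
    ∫ θ, f θ ∂volume[|Ioc 0 π] = (1 / π) * ∫ θ in 0..π, f θ := by
  rw [ProbabilityTheory.cond, MeasureTheory.integral_smul_measure, Real.volume_Ioc, sub_zero,
    ENNReal.toReal_inv, ENNReal.toReal_ofReal pi_pos.le, smul_eq_mul, one_div,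
    intervalIntegral.integral_of_le pi_pos.le]

theorem integral_cond_Ioc_pi_inv_one_add_mul_one_sub_mul_cos {b g ε : ℝ} (hb : 0 < b) (hg : 0 < g)
    (hε : |ε| ≤ 1) :
    ∫ θ, (1 + b⁻¹ * (g * (1 - ε * cos θ)))⁻¹ ∂volume[|Ioc 0 π] =
      b / (b + g) * (1 / √(1 - (ε * g / (b + g)) ^ 2)) := by
  set A := ε * g / (b + g)
  have hA : |A| < 1 := abs_mul_div_add_lt_one hb hg hε
  have hpt : ∀ θ, (1 + b⁻¹ * (g * (1 - ε * cos θ)))⁻¹ = b / (b + g) * (1 - A * cos θ)⁻¹ := by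
    intro θ
    have : 1 + b⁻¹ * (g * (1 - ε * cos θ)) = (b + g) / b * (1 - A * cos θ) := by
      simp only [A]; field_simp; ring
    rw [this, mul_inv, inv_div]
  simp_rw [integral_cond_Ioc_pi, hpt, intervalIntegral.integral_const_mul,
    integral_inv_one_sub_mul_cos hA]
  field_simp

theorem strictMonoOn_mul_one_div_sqrt_one_sub_sq {C : ℝ} (hC : 0 < C) :
    StrictMonoOn (fun A : ℝ => C * (1 / √(1 - A ^ 2))) (Ico 0 1) := by
  intro x hx y hy hxy
  have : 0 < 1 - y ^ 2 := by nlinarith [hy.1, hy.2]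
  refine mul_lt_mul_of_pos_left (one_div_lt_one_div_of_lt (sqrt_pos.mpr this) ?_) hC
  exact sqrt_lt_sqrt this.le (by nlinarith [hx.1])

theorem strictAntiOn_one_sub_sq_div_one_add_sq :
    StrictAntiOn (fun q : ℝ => (1 - q ^ 2) / (1 + q ^ 2)) (Ici 0) := by
  intro p hp q hq hpq
  rw [div_lt_div_iff₀ (by positivity) (by positivity)]
  nlinarith [mem_Ici.mp hp]

theorem strictAntiOn_mul_one_div_sqrt_one_sub_sq_hoyt {b g : ℝ} (hb : 0 < b) (hg : 0 < g) :
    StrictAntiOn (fun q : ℝ => b / (b + g) *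
      (1 / √(1 - ((1 - q ^ 2) / (1 + q ^ 2) * g / (b + g)) ^ 2))) (Ioc 0 1) := by
  refine (strictMonoOn_mul_one_div_sqrt_one_sub_sq (by positivity)).comp_strictAntiOn ?_ ?_
  · intro p hp q hq hpq
    exact div_lt_div_of_pos_right (mul_lt_mul_of_pos_right
      (strictAntiOn_one_sub_sq_div_one_add_sq hp.1.le hq.1.le hpq) hg) (by positivity)
  · intro q hq
    have : 0 ≤ 1 - q ^ 2 := by nlinarith [hq.1, hq.2]
    refine ⟨by positivity, (abs_lt.mp (abs_mul_div_add_lt_one hb hg ?_)).2⟩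
    exact (abs_one_sub_sq_div_one_add_sq_lt_one hq.1.ne').le

theorem positive_secrecy_hoyt_eve_general
    {Ω : Type*} [MeasurableSpace Ω] (P : Measure Ω) [IsProbabilityMeasure P]
    (γb γe : Ω → ℝ) (hmb : Measurable γb) (hme : Measurable γe)
    (hindep : IndepFun γb γe P)
    (γbarb γbare qe : ℝ) (hγb : 0 < γbarb) (hγe : 0 < γbare)
    (hqe0 : 0 < qe)
    (hepos : ∀ ω, 0 ≤ γe ω)
    (hbcdf : ∀ a : ℝ, 0 ≤ a → (P {ω | γb ω ≤ a}).toReal = 1 - Real.exp (-a / γbarb))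
    (hecdf : ∀ a : ℝ, 0 ≤ a → (P {ω | γe ω ≤ a}).toReal =
      1 - (1 / π) * ∫ θ in (0:ℝ)..π,
        Real.exp (-a / (γbare * (1 - (1 - qe ^ 2) / (1 + qe ^ 2) * Real.cos θ)))) :
    (P {ω | γe ω < γb ω}).toReal =
      (γbarb / (γbarb + γbare)) *
        (1 / Real.sqrt (1 -
          ((1 - qe ^ 2) / (1 + qe ^ 2) * γbare / (γbarb + γbare)) ^ 2)) ∧
    StrictAntiOn (fun q : ℝ => (γbarb / (γbarb + γbare)) *
        (1 / Real.sqrt (1 -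
          ((1 - q ^ 2) / (1 + q ^ 2) * γbare / (γbarb + γbare)) ^ 2)))
      (Set.Ioc 0 1) := by
  have hε := abs_one_sub_sq_div_one_add_sq_lt_one hqe0.ne'
  refine ⟨?_, strictAntiOn_mul_one_div_sqrt_one_sub_sq_hoyt hγb hγe⟩
  set c : ℝ → ℝ := fun θ => γbare * (1 - (1 - qe ^ 2) / (1 + qe ^ 2) * cos θ)
  have hc_pos : ∀ θ, 0 < c θ := fun θ => mul_pos hγe (one_sub_mul_cos_pos hε θ)
  have : IsProbabilityMeasure (volume[|Ioc 0 π]) :=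
    cond_isProbabilityMeasure_of_finite (by simp [pi_pos]) (by simp)
  have htail_b : ∀ y, 0 ≤ y → P.map γb (Ioi y) = ENNReal.ofReal (exp (-γbarb⁻¹ * y)) :=
    fun y hy => map_measure_Ioi_eq_ofReal hmb <| (hbcdf y hy).trans (by ring_nf)
  have hcdf_e : ∀ a, 0 ≤ a →
      P.map γe (Iic a) = ENNReal.ofReal (1 - ∫ θ, exp (-a / c θ) ∂volume[|Ioc 0 π]) := by
    intro a ha
    rw [Measure.map_apply hme measurableSet_Iic, ← ENNReal.ofReal_toReal (measure_ne_top _ _),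
      integral_cond_Ioc_pi]
    exact congrArg ENNReal.ofReal (hecdf a ha)
  have he_nonneg : ∀ᵐ y ∂P.map γe, 0 ≤ y :=
    (ae_map_iff hme.aemeasurable measurableSet_Ici).mpr (ae_of_all _ hepos)
  rw [hindep.measure_lt_eq_lintegral_map_Ioi hmb hme,
    lintegral_congr_ae (he_nonneg.mono htail_b),
    lintegral_exp_neg_mul_of_cdf_eq_mixture _ (by fun_prop) hc_pos hcdf_e (inv_pos.mpr hγb),
    ENNReal.toReal_ofReal (integral_nonneg fun θ => by have := hc_pos θ; positivity)]
  exact integral_cond_Ioc_pi_inv_one_add_mul_one_sub_mul_cos hγb hγe hε.le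

theorem positive_secrecy_hoyt_eve
    {Ω : Type*} [MeasurableSpace Ω] (P : Measure Ω) [IsProbabilityMeasure P]
    (γb γe : Ω → ℝ) (hmb : Measurable γb) (hme : Measurable γe)
    (hindep : IndepFun γb γe P)
    (γbarb γbare qe : ℝ) (hγb : 0 < γbarb) (hγe : 0 < γbare)
    (hqe0 : 0 < qe) (hqe1 : qe ≤ 1)
    (hbpos : ∀ ω, 0 ≤ γb ω) (hepos : ∀ ω, 0 ≤ γe ω)
    (hbcdf : ∀ a : ℝ, 0 ≤ a → (P {ω | γb ω ≤ a}).toReal = 1 - Real.exp (-a / γbarb))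
    (hecdf : ∀ a : ℝ, 0 ≤ a → (P {ω | γe ω ≤ a}).toReal =
      1 - (1 / π) * ∫ θ in (0:ℝ)..π,
        Real.exp (-a / (γbare * (1 - (1 - qe ^ 2) / (1 + qe ^ 2) * Real.cos θ)))) :
    (P {ω | γe ω < γb ω}).toReal =
      (γbarb / (γbarb + γbare)) *
        (1 / Real.sqrt (1 -
          ((1 - qe ^ 2) / (1 + qe ^ 2) * γbare / (γbarb + γbare)) ^ 2)) ∧
    StrictAntiOn (fun q : ℝ => (γbarb / (γbarb + γbare)) *
        (1 / Real.sqrt (1 -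
          ((1 - q ^ 2) / (1 + q ^ 2) * γbare / (γbarb + γbare)) ^ 2)))
      (Set.Ioc 0 1) :=
  positive_secrecy_hoyt_eve_general P γb γe hmb hme hindep γbarb γbare qe hγb hγe hqe0 hepos hbcdf
    hecdf
end
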